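/- Let B be a noetherian B_dR^+-algebra and I an ideal of B; let (f_1,…,f_m) and (f_1,…,f_m,g) be two finite generating sets of I. Then the natural B-algebra map (B[x_1,…,x_m]/(ξx_i − f_i, 1≤i≤m))/(ξ^∞-torsion) → (B[x_1,…,x_m,y]/(ξx_i − f_i, 1≤i≤m; ξy − g))/(ξ^∞-torsion), sending x_i to x_i, is an isomorphism; the same holds after ξ-adic completion. In particular, the prismatic envelope B[I/ξ]^∧_tf := ((B[x_1,…,x_m]/(ξx_i − f_i))^∧)/(ξ^∞-torsion) is independent of the choice of finite generators of I. -/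

import Mathlib

set_option maxHeartbeats 1000000
set_option synthInstance.maxHeartbeats 400000

/-!
# Statement 1

Let `B` be a noetherian `B_dR^+`-algebra and `I` an ideal of `B`; let `(f_1,…,f_m)` and
`(f_1,…,f_m,g)` be two finite generating sets of `I`.  Then the natural `B`-algebra map
`(B[x_1,…,x_m]/(ξx_i − f_i))/(ξ^∞-torsion) → (B[x_1,…,x_m,y]/(ξx_i − f_i; ξy − g))/(ξ^∞-torsion)`,
sending `x_i ↦ x_i`, is an isomorphism; the same holds after ξ-adic completion.  In
particular the prismatic envelope `B[I/ξ]^∧_tf` is independent of the choice of generators.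

Here `B_dR^+` is Fontaine's de Rham period ring of `K`, formalized as a commutative ring
`BdR` with a surjection `θ : BdR →+* K` onto a field whose kernel is generated by a
nonzerodivisor `ξ`, with `BdR` ξ-adically complete.  The `ξ^∞`-torsion of an algebra `A`
is the ideal of elements killed by a power of (the image of) `ξ`, and the ξ-adic completion
is `AdicCompletion (Ideal.span {ξ})`.  We model `B[x_1,…,x_m]` by
`MvPolynomial (Fin m) B` and `B[x_1,…,x_m,y]` by `MvPolynomial (Option (Fin m)) B`, the
variable `y` corresponding to `none`.
-/

/-- The ideal of `x`-power torsion elements of a commutative ring `A`. -/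
def xiTorsion (A : Type*) [CommRing A] (x : A) : Ideal A where
  carrier := {a | ∃ n : ℕ, x ^ n * a = 0}
  zero_mem' := ⟨0, by simp⟩
  add_mem' := by
    rintro a b ⟨n, hn⟩ ⟨k, hk⟩
    refine ⟨n + k, ?_⟩
    have h1 : x ^ (n + k) * a = x ^ k * (x ^ n * a) := by ring
    have h2 : x ^ (n + k) * b = x ^ n * (x ^ k * b) := by ring
    rw [mul_add, h1, h2, hn, hk, mul_zero, mul_zero, add_zero]
  smul_mem' := by
    rintro c a ⟨n, hn⟩
    refine ⟨n, ?_⟩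
    have h : x ^ n * (c • a) = c * (x ^ n * a) := by
      rw [smul_eq_mul]; ring
    rw [h, hn, mul_zero]

section Envelope

variable (B : Type) [CommRing B] (ξB : B) {σ : Type} (f : σ → B)

/-- `B[x_i : i ∈ σ]/(ξ x_i - f_i)`. -/
abbrev envRel : Type :=
  MvPolynomial σ B ⧸
    Ideal.span (Set.range fun i : σ =>
      MvPolynomial.C ξB * MvPolynomial.X i - MvPolynomial.C (f i))

/-- The image of `ξ` in `envRel`. -/
noncomputable abbrev envRelXi : envRel B ξB f :=
  Ideal.Quotient.mk _ (MvPolynomial.C ξB)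

/-- `(B[x_i]/(ξ x_i - f_i)) / (ξ^∞-torsion)`. -/
abbrev envTf : Type :=
  envRel B ξB f ⧸ xiTorsion (envRel B ξB f) (envRelXi B ξB f)

/-- The image of `ξ` in `envTf`. -/
noncomputable abbrev envTfXi : envTf B ξB f :=
  Ideal.Quotient.mk _ (envRelXi B ξB f)

/-- The class of the variable `x_i` in `envTf`. -/
noncomputable abbrev envTfX (i : σ) : envTf B ξB f :=
  Ideal.Quotient.mk _ (Ideal.Quotient.mk _ (MvPolynomial.X i))

/-- The ξ-adic completion of `envTf`: this is the prismatic envelope `B[I/ξ]^∧_tf`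
relative to the chosen generators of `I`.  -/
abbrev envCompl : Type :=
  AdicCompletion (Ideal.span {envTfXi B ξB f}) (envTf B ξB f)

end Envelope

/-- The extended family of generators `(f_1,…,f_m,g)`, indexed by `Option (Fin m)`
with `none ↦ g`. -/
def extGen {B : Type} [CommRing B] {m : ℕ} (f : Fin m → B) (g : B) :
    Option (Fin m) → B :=
  fun i => Option.elim i g f

/-!
If `g = ∑ cⱼ fⱼ`, then in `B[x, y]/(ξxᵢ - fᵢ, ξy - g)` the element `y - ∑ cⱼ xⱼ` is killed by `ξ`,
so it vanishes once the `ξ^∞`-torsion is divided out. Both torsion-free envelopes corepresent the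
same functor — `B`-algebras on which `ξ` is regular, with elements `rᵢ` such that `ξ rᵢ = fᵢ` —
and `x ↦ x`, `y ↦ ∑ cⱼ xⱼ` inverts the natural map. The completed statement follows because adic
completion is functorial for ring isomorphisms carrying one ideal `(ξ)` onto the other.
-/

theorem isLeftRegular_mk_xiTorsion {A : Type*} [CommRing A] (x : A) :
    IsLeftRegular (Ideal.Quotient.mk (xiTorsion A x) x) := by
  intro a b hab
  obtain ⟨a, rfl⟩ := Ideal.Quotient.mk_surjective a
  obtain ⟨b, rfl⟩ := Ideal.Quotient.mk_surjective b
  obtain ⟨n, hn⟩ := Ideal.Quotient.eq.mp hab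
  refine Ideal.Quotient.eq.mpr ⟨n + 1, ?_⟩
  rw [← hn]
  ring

theorem Ideal.pow_le_comap_pow_of_map_le {R S : Type*} [CommRing R] [CommRing S] {e : R →+* S}
    {I : Ideal R} {J : Ideal S} (h : I.map e ≤ J) (n : ℕ) : I ^ n ≤ (J ^ n).comap e :=
  (Ideal.pow_right_mono (Ideal.le_comap_of_map_le h) n).trans (Ideal.le_comap_pow e n)

theorem Ideal.map_span_singleton_algebraMap {R A A' : Type*} [CommRing R] [CommRing A]
    [CommRing A'] [Algebra R A] [Algebra R A'] (e : A →ₐ[R] A') (r : R) :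
    (Ideal.span {algebraMap R A r}).map e = Ideal.span {algebraMap R A' r} := by
  rw [Ideal.map_span, Set.image_singleton, e.commutes]

namespace AdicCompletion

variable {R S T : Type*} [CommRing R] [CommRing S] [CommRing T] {I : Ideal R} {J : Ideal S}
  {K : Ideal T}

theorem factorPow_evalₐ {m n : ℕ} (hle : m ≤ n) (x : AdicCompletion I R) :
    Ideal.Quotient.factorPow I hle (evalₐ I n x) = evalₐ I m x := by
  obtain ⟨a, rfl⟩ := mk_surjective I R x
  rw [evalₐ_mk, evalₐ_mk, Ideal.Quotient.factor_mk]
  exact AdicCompletion.Ideal.mk_eq_mk I hle a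

theorem factorPow_comp_quotientMap_comp_evalₐ {e : R →+* S} (h : I.map e ≤ J) {m n : ℕ}
    (hle : m ≤ n) :
    (Ideal.Quotient.factorPow J hle).comp
      ((Ideal.quotientMap (J ^ n) e (Ideal.pow_le_comap_pow_of_map_le h n)).comp
        (evalₐ I n : AdicCompletion I R →+* R ⧸ I ^ n)) =
    (Ideal.quotientMap (J ^ m) e (Ideal.pow_le_comap_pow_of_map_le h m)).comp
      (evalₐ I m : AdicCompletion I R →+* R ⧸ I ^ m) := by
  ext x
  simp only [RingHom.comp_apply, RingHom.coe_coe]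
  rw [← factorPow_evalₐ hle x]
  obtain ⟨r, hr⟩ := Ideal.Quotient.mk_surjective (evalₐ I n x)
  rw [← hr]
  rfl

noncomputable def mapRingHom (e : R →+* S) (h : I.map e ≤ J) :
    AdicCompletion I R →+* AdicCompletion J S :=
  liftRingHom J _ (factorPow_comp_quotientMap_comp_evalₐ h)

theorem evalₐ_mapRingHom (e : R →+* S) (h : I.map e ≤ J) (n : ℕ) (x : AdicCompletion I R) :
    evalₐ J n (mapRingHom e h x) =
      Ideal.quotientMap (J ^ n) e (Ideal.pow_le_comap_pow_of_map_le h n) (evalₐ I n x) :=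
  evalₐ_liftRingHom _ _ (factorPow_comp_quotientMap_comp_evalₐ h) _ _

theorem mapRingHom_of (e : R →+* S) (h : I.map e ≤ J) (r : R) :
    mapRingHom e h (of I R r) = of J S (e r) :=
  ext_evalₐ fun n ↦ by rw [evalₐ_mapRingHom, evalₐ_of, evalₐ_of, Ideal.quotientMap_mk]

theorem mapRingHom_comp {e : R →+* S} {e' : S →+* T} (h : I.map e ≤ J) (h' : J.map e' ≤ K) :
    (mapRingHom e' h').comp (mapRingHom e h) =
      mapRingHom (e'.comp e) (by rw [← Ideal.map_map]; exact (Ideal.map_mono h).trans h') :=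
  RingHom.ext fun x ↦ ext_evalₐ fun n ↦ by
    obtain ⟨r, hr⟩ := Ideal.Quotient.mk_surjective (evalₐ I n x)
    simp only [RingHom.comp_apply, evalₐ_mapRingHom, ← hr, Ideal.quotientMap_mk]

theorem mapRingHom_id (h : I.map (RingHom.id R) ≤ I) :
    mapRingHom (RingHom.id R) h = RingHom.id _ :=
  RingHom.ext fun x ↦ ext_evalₐ fun n ↦ by
    obtain ⟨r, hr⟩ := Ideal.Quotient.mk_surjective (evalₐ I n x)
    simp only [evalₐ_mapRingHom, ← hr, Ideal.quotientMap_mk, RingHom.id_apply]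

noncomputable def congrRingEquiv (e : R ≃+* S) (h : I.map (e : R →+* S) = J) :
    AdicCompletion I R ≃+* AdicCompletion J S :=
  RingEquiv.ofRingHom (mapRingHom e h.le)
    (mapRingHom e.symm (by rw [← h]; exact (Ideal.map_of_equiv e).le))
    (by simp [mapRingHom_comp, mapRingHom_id])
    (by simp [mapRingHom_comp, mapRingHom_id])

theorem congrRingEquiv_of (e : R ≃+* S) (h : I.map (e : R →+* S) = J) (r : R) :
    congrRingEquiv e h (of I R r) = of J S (e r) :=
  mapRingHom_of _ h.le r

end AdicCompletion

section Envelope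

open MvPolynomial

variable {B : Type} [CommRing B] {ξB : B} {σ : Type} {f : σ → B}

theorem isLeftRegular_envTfXi : IsLeftRegular (envTfXi B ξB f) :=
  isLeftRegular_mk_xiTorsion _

theorem envTfXi_mul_envTfX (i : σ) :
    envTfXi B ξB f * envTfX B ξB f i = algebraMap B _ (f i) := by
  change Ideal.Quotient.mk _ (Ideal.Quotient.mk _ (C ξB * X i)) =
    Ideal.Quotient.mk _ (Ideal.Quotient.mk _ (C (f i)))
  exact congrArg _ (Ideal.Quotient.eq.mpr (Ideal.subset_span ⟨i, rfl⟩))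

theorem envTfXi_mul_sum_smul {ι : Type*} [Fintype ι] (c : ι → B) (e : ι → σ) :
    envTfXi B ξB f * ∑ k, c k • envTfX B ξB f (e k) =
      algebraMap B _ (∑ k, c k * f (e k)) := by
  rw [Finset.mul_sum, map_sum]
  refine Finset.sum_congr rfl fun k _ ↦ ?_
  rw [mul_smul_comm, envTfXi_mul_envTfX, Algebra.smul_def, map_mul]

theorem envTfX_eq_sum_smul {ι : Type*} [Fintype ι] (c : ι → B) (e : ι → σ) (i : σ)
    (h : f i = ∑ k, c k * f (e k)) :
    envTfX B ξB f i = ∑ k, c k • envTfX B ξB f (e k) :=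
  isLeftRegular_envTfXi (f := f) <| by
    beta_reduce
    rw [envTfXi_mul_envTfX, envTfXi_mul_sum_smul, h]

variable {R : Type*} [CommRing R] [Algebra B R] (r : σ → R)
  (hr : ∀ i, algebraMap B R ξB * r i = algebraMap B R (f i))

noncomputable def envRelLift : envRel B ξB f →ₐ[B] R :=
  Ideal.Quotient.liftₐ _ (aeval r) fun _ ha ↦
    (Ideal.span_le (I := RingHom.ker (aeval r))).mpr
      (Set.range_subset_iff.mpr fun i ↦ by simp [hr]) ha

noncomputable def envTfLift (hR : IsLeftRegular (algebraMap B R ξB)) : envTf B ξB f →ₐ[B] R :=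
  Ideal.Quotient.liftₐ _ (envRelLift r hr) fun a ⟨n, hn⟩ ↦ (hR.pow n) <| by
    beta_reduce
    rw [mul_zero, ← (envRelLift r hr).commutes, ← map_pow, ← map_mul]
    exact (congrArg _ hn).trans (map_zero _)

theorem envTfLift_envTfX (hR : IsLeftRegular (algebraMap B R ξB)) (i : σ) :
    envTfLift r hr hR (envTfX B ξB f i) = r i :=
  aeval_X r i

theorem envTf_algHom_ext {φ ψ : envTf B ξB f →ₐ[B] R}
    (h : ∀ i, φ (envTfX B ξB f i) = ψ (envTfX B ξB f i)) : φ = ψ :=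
  Ideal.Quotient.algHom_ext _ <| Ideal.Quotient.algHom_ext _ <| MvPolynomial.algHom_ext h

end Envelope

section ChangeOfGenerators

variable {B : Type} [CommRing B] (ξB : B) {m : ℕ} (f : Fin m → B) (g : B) (c : Fin m → B)

noncomputable def envTfToExtGen : envTf B ξB f →ₐ[B] envTf B ξB (extGen f g) :=
  envTfLift (fun i ↦ envTfX B ξB (extGen f g) (some i)) (fun i ↦ envTfXi_mul_envTfX (some i))
    isLeftRegular_envTfXi

noncomputable def envTfOfExtGen (hc : ∑ j, c j * f j = g) :
    envTf B ξB (extGen f g) →ₐ[B] envTf B ξB f :=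
  envTfLift (fun i ↦ Option.elim i (∑ j, c j • envTfX B ξB f j) (envTfX B ξB f))
    (by
      rintro (_ | j)
      · exact (envTfXi_mul_sum_smul c id).trans (congrArg _ hc)
      · exact envTfXi_mul_envTfX j)
    isLeftRegular_envTfXi

theorem envTfToExtGen_envTfX (i : Fin m) :
    envTfToExtGen ξB f g (envTfX B ξB f i) = envTfX B ξB (extGen f g) (some i) :=
  envTfLift_envTfX (f := f) _ _ _ i

theorem envTfOfExtGen_envTfX (hc : ∑ j, c j * f j = g) (i : Option (Fin m)) :
    envTfOfExtGen ξB f g c hc (envTfX B ξB (extGen f g) i) =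
      Option.elim i (∑ j, c j • envTfX B ξB f j) (envTfX B ξB f) :=
  envTfLift_envTfX (f := extGen f g) _ _ _ i

noncomputable def envTfEquivExtGen (hc : ∑ j, c j * f j = g) :
    envTf B ξB f ≃ₐ[B] envTf B ξB (extGen f g) :=
  AlgEquiv.ofAlgHom (envTfToExtGen ξB f g) (envTfOfExtGen ξB f g c hc)
    (envTf_algHom_ext fun i ↦ by
      rw [AlgHom.comp_apply, envTfOfExtGen_envTfX, AlgHom.id_apply]
      rcases i with _ | j
      · rw [Option.elim, map_sum]
        simp only [map_smul, envTfToExtGen_envTfX]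
        exact (envTfX_eq_sum_smul (f := extGen f g) c some none hc.symm).symm
      · exact envTfToExtGen_envTfX ξB f g j)
    (envTf_algHom_ext fun i ↦ by
      rw [AlgHom.comp_apply, envTfToExtGen_envTfX, envTfOfExtGen_envTfX, AlgHom.id_apply]
      rfl)

theorem envTfEquivExtGen_envTfX (hc : ∑ j, c j * f j = g) (i : Fin m) :
    envTfEquivExtGen ξB f g c hc (envTfX B ξB f i) = envTfX B ξB (extGen f g) (some i) :=
  envTfToExtGen_envTfX ξB f g i

end ChangeOfGenerators

theorem statement1_general
    (BdR : Type) [CommRing BdR] (ξ : BdR)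
    -- B a noetherian BdR-algebra, I an ideal
    (B : Type) [CommRing B] [Algebra BdR B]
    (I : Ideal B)
    -- two finite generating sets (f_i) ⊆ (f_i, g) of I
    (m : ℕ) (f : Fin m → B) (g : B)
    (hf : Ideal.span (Set.range f) = I) (hg : g ∈ I) :
    -- the natural B-algebra map between the torsion-free quotients, x_i ↦ x_i,
    -- is an isomorphism,
    ∃ φ : envTf B (algebraMap BdR B ξ) f →ₐ[B]
          envTf B (algebraMap BdR B ξ) (extGen f g),
      (∀ i : Fin m,
        φ (envTfX B (algebraMap BdR B ξ) f i) =
          envTfX B (algebraMap BdR B ξ) (extGen f g) (some i)) ∧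
      Function.Bijective φ ∧
      -- and the same holds after ξ-adic completion (so the prismatic envelope
      -- B[I/ξ]^∧_tf does not depend on the chosen finite generators of I)
      ∃ φc : envCompl B (algebraMap BdR B ξ) f →+*
             envCompl B (algebraMap BdR B ξ) (extGen f g),
        (∀ a : envTf B (algebraMap BdR B ξ) f,
          φc (algebraMap _ _ a) = algebraMap _ _ (φ a)) ∧
        Function.Bijective φc := by
  obtain ⟨c, hc⟩ := (Submodule.mem_span_range_iff_exists_fun B).mp (hf ▸ hg)
  simp only [smul_eq_mul] at hc
  set ξB := algebraMap BdR B ξ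
  let e := envTfEquivExtGen ξB f g c hc
  have he : (Ideal.span {envTfXi B ξB f}).map (e.toRingEquiv : _ →+* _) =
      Ideal.span {envTfXi B ξB (extGen f g)} :=
    Ideal.map_span_singleton_algebraMap e.toAlgHom ξB
  let ec := AdicCompletion.congrRingEquiv e.toRingEquiv he
  exact ⟨e, envTfEquivExtGen_envTfX ξB f g c hc, e.bijective,
    ec.toRingHom, AdicCompletion.congrRingEquiv_of _ he, ec.bijective⟩

theorem statement1
    -- B_dR^+ data: K a field, θ : BdR → K surjective, ker θ = (ξ), ξ a nonzerodivisor,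
    -- BdR ξ-adically complete
    (K : Type) [Field K] (BdR : Type) [CommRing BdR]
    (θ : BdR →+* K) (hθ : Function.Surjective θ) (ξ : BdR)
    (hker : RingHom.ker θ = Ideal.span {ξ}) (hξ : ξ ∈ nonZeroDivisors BdR)
    (hBdRcomplete : IsAdicComplete (Ideal.span {ξ}) BdR)
    -- B a noetherian BdR-algebra, I an ideal
    (B : Type) [CommRing B] [IsNoetherianRing B] [Algebra BdR B]
    (I : Ideal B)
    -- two finite generating sets (f_i) ⊆ (f_i, g) of I
    (m : ℕ) (f : Fin m → B) (g : B)
    (hf : Ideal.span (Set.range f) = I) (hg : g ∈ I) :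
    -- the natural B-algebra map between the torsion-free quotients, x_i ↦ x_i,
    -- is an isomorphism,
    ∃ φ : envTf B (algebraMap BdR B ξ) f →ₐ[B]
          envTf B (algebraMap BdR B ξ) (extGen f g),
      (∀ i : Fin m,
        φ (envTfX B (algebraMap BdR B ξ) f i) =
          envTfX B (algebraMap BdR B ξ) (extGen f g) (some i)) ∧
      Function.Bijective φ ∧
      -- and the same holds after ξ-adic completion (so the prismatic envelope
      -- B[I/ξ]^∧_tf does not depend on the chosen finite generators of I)
      ∃ φc : envCompl B (algebraMap BdR B ξ) f →+*
             envCompl B (algebraMap BdR B ξ) (extGen f g),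
        (∀ a : envTf B (algebraMap BdR B ξ) f,
          φc (algebraMap _ _ a) = algebraMap _ _ (φ a)) ∧
        Function.Bijective φc :=
  statement1_general BdR ξ B I m f g hf hg
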